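/- arXiv:0904.2759 — 5 statements merged into one kernel-verified Lean document; each statement's English description precedes it below -/
import Mathlib

section
/- Let f : D → {0,1} with D ⊆ {0,1}^n, and for b ∈ {0,1} let F_b = {x ∈ D : f(x) = b}. Then for every cost vector s ∈ [0,∞)^n, the infimum over all span programs P on n variables with f_P(x) = f(x) for all x ∈ D of wsize_s(P, D) equals the infimum, over all m ∈ ℕ and all families of vectors v_{x,j} ∈ ℝ^m (for x ∈ D, j ∈ [n]) satisfying ∑_{j ∈ [n] : x_j ≠ y_j} ⟨v_{x,j}, v_{y,j}⟩ = 1 for every x ∈ F_0 and y ∈ F_1, of max_{x ∈ D} ∑_{j ∈ [n]} s_j ‖v_{x,j}‖². -/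
open scoped ComplexInnerProductSpace

/-- A span program on `n` boolean variables: an inner product space `ℂ^d`, a target vector,
and input vectors indexed by `Fin m`, each either free (`label i = none`) or labeled by a
pair `(j, b)` (`label i = some (j, b)`, meaning `i ∈ I_{j,b}`). -/
structure SpanProgram (n : ℕ) : Type where
  d : ℕ
  m : ℕ
  label : Fin m → Option (Fin n × Bool)
  target : EuclideanSpace ℂ (Fin d)
  input : Fin m → EuclideanSpace ℂ (Fin d)

namespace SpanProgram

variable {n : ℕ}

/-- Input vector `i` is available on input `x`: it is free, or labeled `(j, x_j)` for some `j`. -/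
def avail (P : SpanProgram n) (x : Fin n → Bool) (i : Fin P.m) : Prop :=
  P.label i = none ∨ ∃ j : Fin n, P.label i = some (j, x j)

instance (P : SpanProgram n) (x : Fin n → Bool) (i : Fin P.m) : Decidable (P.avail x i) :=
  inferInstanceAs (Decidable (P.label i = none ∨ ∃ j : Fin n, P.label i = some (j, x j)))

/-- The boolean function computed by `P`:  `f_P(x) = 1` iff the target is in the range of
`A ∘ Π(x)`, i.e. the target is a linear combination of the available input vectors. -/
def eval (P : SpanProgram n) (x : Fin n → Bool) : Prop :=
  ∃ w : Fin P.m → ℂ, ∑ i, (if P.avail x i then w i else 0) • P.input i = P.target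

/-- The squared cost weight of coordinate `i`:  `s j` if `i ∈ I_{j,b}`, and `0` if `i` is free.
Thus `‖S w‖² = ∑ i, P.cw s i * ‖w i‖²`. -/
def cw (P : SpanProgram n) (s : Fin n → ℝ) (i : Fin P.m) : ℝ :=
  match P.label i with
  | none => 0
  | some jb => s jb.1

open Classical in
/-- The witness size of `P` on input `x` with costs `s`. -/
noncomputable def wsizex (P : SpanProgram n) (s : Fin n → ℝ) (x : Fin n → Bool) : ℝ :=
  if P.eval x then
    sInf { r : ℝ | ∃ w : Fin P.m → ℂ,
      (∑ i, (if P.avail x i then w i else 0) • P.input i = P.target) ∧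
      r = ∑ i, P.cw s i * ‖w i‖ ^ 2 }
  else
    sInf { r : ℝ | ∃ w' : EuclideanSpace ℂ (Fin P.d), ⟪P.target, w'⟫ = 1 ∧
      (∀ i, P.avail x i → ⟪P.input i, w'⟫ = 0) ∧
      r = ∑ i, P.cw s i * ‖⟪P.input i, w'⟫‖ ^ 2 }

/-- The witness size of `P` with costs `s`, restricted to the domain `D`:
`max_{x ∈ D} wsize_s(P, x)`. -/
noncomputable def wsizeD (P : SpanProgram n) (s : Fin n → ℝ) (D : Set (Fin n → Bool)) : ℝ :=
  sSup { r : ℝ | ∃ x ∈ D, r = P.wsizex s x }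

end SpanProgram

/-!
A span program gives a vector solution: for each `x ∈ D` take a nearly optimal positive witness
`w_x` if `f x = 1`, or the coefficients `(⟪v_i, w'_x⟫)_i` of a nearly optimal negative witness
`w'_x` if `f x = 0`, and let `v_{x,j}` be its restriction to `I_{j,x_j}`, resp. `I_{j,¬x_j}`
(made real through an isometry `ℂ^m ≅ ℝ^{2m}`). For `x ∈ F₀` and `y ∈ F₁` the pairing
`⟪w'_x, A Π(y) w_y⟫ = ⟪w'_x, t⟫ = 1` only sees the inputs of `I(y) \ I(x)`, i.e. those of
`I_{j,y_j}` with `x_j ≠ y_j`, which is the vector constraint, and no cost increases.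

Conversely a vector solution gives a span program on `ℂ^D`: the target is the indicator of `F₀`,
and input `(j, b, k)`, labelled `(j, b)`, has `x`-coordinate `v_{x,j}[k]` if `x ∈ F₀` and
`b ≠ x_j`. Then `y ∈ F₁` has the positive witness `v_{y,j}[k]` on the inputs `(j, y_j, k)` and
`x ∈ F₀` the negative witness `e_x`, both of cost `∑_j s_j ‖v_{x,j}‖²`.
-/

open Finset ComplexConjugate

lemma Real.sInf_le_sInf_of_forall_exists_le_add {A B : Set ℝ} (hA : A.Nonempty)
    (hB : BddBelow B) (h : ∀ a ∈ A, ∀ ε > 0, ∃ b ∈ B, b ≤ a + ε) : sInf B ≤ sInf A :=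
  le_csInf hA fun a ha => le_of_forall_pos_le_add fun ε hε =>
    let ⟨_, hb, hba⟩ := h a ha ε hε
    (csInf_le hB hb).trans hba

/-- Not `rfl`: the real inner product of `EuclideanSpace ℂ ι` is the `PiLp` one. -/
lemma EuclideanSpace.real_inner_eq_re_inner {ι : Type*} [Fintype ι]
    (a b : EuclideanSpace ℂ ι) : inner ℝ a b = (⟪a, b⟫).re := by
  simp [PiLp.inner_apply, Complex.re_sum, mul_comm]

section VectorFamily

variable {n m : ℕ}

noncomputable def blockVec (c : Fin n → Bool) (u : Fin n → EuclideanSpace ℝ (Fin m))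
    (p : Fin n × Bool × Fin m) : ℂ :=
  if p.2.1 = c p.1 then (u p.1 p.2.2 : ℂ) else 0

lemma sum_mul_norm_blockVec_sq (s : Fin n → ℝ) (c : Fin n → Bool)
    (u : Fin n → EuclideanSpace ℝ (Fin m)) :
    ∑ p, s p.1 * ‖blockVec c u p‖ ^ 2 = ∑ j, s j * ‖u j‖ ^ 2 := by
  simp [blockVec, Fintype.sum_prod_type, apply_ite, EuclideanSpace.norm_sq_eq, mul_sum]

lemma sum_blockVec_mul_blockVec (c c' : Fin n → Bool) (u u' : Fin n → EuclideanSpace ℝ (Fin m)) :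
    ∑ p, blockVec c u p * blockVec c' u' p =
      ∑ j ∈ univ.filter (fun j => c j = c' j), (inner ℝ (u j) (u' j) : ℂ) := by
  simp only [blockVec, Fintype.sum_prod_type, Fintype.sum_bool, sum_filter, PiLp.inner_apply]
  refine sum_congr rfl fun j _ => ?_
  cases c j <;> cases c' j <;> simp [mul_comm]

variable {D : Finset (Fin n → Bool)}

def IsFeasibleFamily (f : D → Bool) {E : Type*} [Inner ℝ E] (v : D → Fin n → E) : Prop :=
  ∀ x y : D, f x = false → f y = true →
    ∑ j ∈ univ.filter (fun j : Fin n => x.1 j ≠ y.1 j), inner ℝ (v x j) (v y j) = 1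

lemma IsFeasibleFamily.exists_euclidean {f : D → Bool} {E : Type*} [NormedAddCommGroup E]
    [InnerProductSpace ℝ E] [FiniteDimensional ℝ E] {v : D → Fin n → E}
    (hv : IsFeasibleFamily f v) :
    ∃ (m : ℕ) (v' : D → Fin n → EuclideanSpace ℝ (Fin m)),
      IsFeasibleFamily f v' ∧ ∀ x j, ‖v' x j‖ = ‖v x j‖ :=
  ⟨_, fun x j => (stdOrthonormalBasis ℝ E).repr (v x j),
    fun x y hx hy => by simpa only [LinearIsometryEquiv.inner_map_map] using hv x y hx hy,
    fun _ _ => LinearIsometryEquiv.norm_map _ _⟩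

/-- `v_{x,j} = e_x` for `x ∈ F₀`, and `v_{y,j} = ∑_{x ∈ F₀, x_j ≠ y_j} e_x / d_H(x, y)`
for `y ∈ F₁`. -/
lemma exists_isFeasibleFamily (f : D → Bool) :
    ∃ v : D → Fin n → EuclideanSpace ℝ D, IsFeasibleFamily f v := by
  classical
  refine ⟨fun y j => if f y then WithLp.toLp 2 fun x =>
      if f x = false ∧ x.1 j ≠ y.1 j then ((hammingDist x.1 y.1 : ℕ) : ℝ)⁻¹ else 0
    else EuclideanSpace.single y 1, fun x y hx hy => ?_⟩
  have hxy : x.1 ≠ y.1 := fun h => by simp [Subtype.ext h, hy] at hx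
  simp only [hx, hy, if_true, Bool.false_eq_true, if_false, EuclideanSpace.inner_single_left,
    map_one, one_mul, true_and]
  rw [sum_congr rfl fun j hj => if_pos (mem_filter.1 hj).2, sum_const, nsmul_eq_mul]
  exact mul_inv_cancel₀ (Nat.cast_ne_zero.2 (hammingDist_pos.2 hxy).ne')

end VectorFamily

namespace SpanProgram

variable {n : ℕ} (P : SpanProgram n) {s : Fin n → ℝ}

section WitnessSize

variable {x : Fin n → Bool}

def posWitnessCosts (s : Fin n → ℝ) (x : Fin n → Bool) : Set ℝ :=
  { r | ∃ w : Fin P.m → ℂ, (∑ i, (if P.avail x i then w i else 0) • P.input i = P.target) ∧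
      r = ∑ i, P.cw s i * ‖w i‖ ^ 2 }

def negWitnessCosts (s : Fin n → ℝ) (x : Fin n → Bool) : Set ℝ :=
  { r | ∃ w' : EuclideanSpace ℂ (Fin P.d), ⟪P.target, w'⟫ = 1 ∧
      (∀ i, P.avail x i → ⟪P.input i, w'⟫ = 0) ∧ r = ∑ i, P.cw s i * ‖⟪P.input i, w'⟫‖ ^ 2 }

lemma wsizex_of_eval (h : P.eval x) : P.wsizex s x = sInf (P.posWitnessCosts s x) := if_pos h

lemma wsizex_of_not_eval (h : ¬ P.eval x) : P.wsizex s x = sInf (P.negWitnessCosts s x) := if_neg h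

lemma cw_nonneg (hs : ∀ j, 0 ≤ s j) (i : Fin P.m) : 0 ≤ P.cw s i := by
  unfold cw
  split <;> simp [hs]

lemma sum_cw_mul_nonneg (hs : ∀ j, 0 ≤ s j) (c : Fin P.m → ℂ) :
    0 ≤ ∑ i, P.cw s i * ‖c i‖ ^ 2 :=
  sum_nonneg fun i _ => mul_nonneg (P.cw_nonneg hs i) (sq_nonneg _)

lemma eval_iff_mem_span : P.eval x ↔
    P.target ∈ Submodule.span ℂ (Set.range fun i => if P.avail x i then P.input i else 0) := by
  simp only [eval, Submodule.mem_span_range_iff_exists_fun, ite_smul, smul_ite, zero_smul,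
    smul_zero]

lemma exists_negWitness_of_not_eval (h : ¬ P.eval x) :
    ∃ w', ⟪P.target, w'⟫ = 1 ∧ ∀ i, P.avail x i → ⟪P.input i, w'⟫ = 0 := by
  rw [eval_iff_mem_span, ← Submodule.orthogonal_orthogonal (Submodule.span _ _),
    Submodule.mem_orthogonal] at h
  push Not at h
  obtain ⟨u, hu, htu⟩ := h
  refine ⟨(⟪P.target, u⟫)⁻¹ • u, ?_, fun i hi => ?_⟩
  · rw [inner_smul_right, inv_mul_cancel₀]
    rwa [← inner_conj_symm, map_ne_zero]
  · have := (Submodule.mem_orthogonal _ u).1 hu _ (Submodule.subset_span ⟨i, rfl⟩)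
    simp only [if_pos hi] at this
    rw [inner_smul_right, this, mul_zero]

lemma not_eval_of_negWitness {w'} (ht : ⟪P.target, w'⟫ = 1)
    (h0 : ∀ i, P.avail x i → ⟪P.input i, w'⟫ = 0) : ¬ P.eval x := by
  rintro ⟨w, hw⟩
  have : ⟪P.target, w'⟫ = 0 := by
    rw [← hw, sum_inner]
    refine sum_eq_zero fun i _ => ?_
    split_ifs with hi <;> simp [inner_smul_left, h0 i, hi]
  simp [ht] at this

lemma wsizex_le_of_posWitness (hs : ∀ j, 0 ≤ s j) {w : Fin P.m → ℂ}
    (hw : ∑ i, (if P.avail x i then w i else 0) • P.input i = P.target) :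
    P.wsizex s x ≤ ∑ i, P.cw s i * ‖w i‖ ^ 2 := by
  rw [P.wsizex_of_eval ⟨w, hw⟩]
  refine csInf_le ⟨0, ?_⟩ ⟨w, hw, rfl⟩
  rintro _ ⟨w, -, rfl⟩
  exact P.sum_cw_mul_nonneg hs w

lemma wsizex_le_of_negWitness (hs : ∀ j, 0 ≤ s j) {w'} (ht : ⟪P.target, w'⟫ = 1)
    (h0 : ∀ i, P.avail x i → ⟪P.input i, w'⟫ = 0) :
    P.wsizex s x ≤ ∑ i, P.cw s i * ‖⟪P.input i, w'⟫‖ ^ 2 := by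
  rw [P.wsizex_of_not_eval (P.not_eval_of_negWitness ht h0)]
  refine csInf_le ⟨0, ?_⟩ ⟨w', ht, h0, rfl⟩
  rintro _ ⟨w', -, -, rfl⟩
  exact P.sum_cw_mul_nonneg hs _

lemma exists_posWitness_lt (h : P.eval x) {ε : ℝ} (hε : 0 < ε) :
    ∃ w : Fin P.m → ℂ, ∑ i, (if P.avail x i then w i else 0) • P.input i = P.target ∧
      ∑ i, P.cw s i * ‖w i‖ ^ 2 < P.wsizex s x + ε := by
  obtain ⟨w₀, hw₀⟩ := h
  rw [P.wsizex_of_eval ⟨w₀, hw₀⟩]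
  obtain ⟨_, ⟨w, hw, rfl⟩, hlt⟩ :=
    Real.lt_sInf_add_pos (s := P.posWitnessCosts s x) ⟨_, w₀, hw₀, rfl⟩ hε
  exact ⟨w, hw, hlt⟩

lemma exists_negWitness_lt (h : ¬ P.eval x) {ε : ℝ} (hε : 0 < ε) :
    ∃ w', ⟪P.target, w'⟫ = 1 ∧ (∀ i, P.avail x i → ⟪P.input i, w'⟫ = 0) ∧
      ∑ i, P.cw s i * ‖⟪P.input i, w'⟫‖ ^ 2 < P.wsizex s x + ε := by
  obtain ⟨w₀, ht₀, h0₀⟩ := P.exists_negWitness_of_not_eval h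
  rw [P.wsizex_of_not_eval h]
  obtain ⟨_, ⟨w', ht, h0, rfl⟩, hlt⟩ :=
    Real.lt_sInf_add_pos (s := P.negWitnessCosts s x) ⟨_, w₀, ht₀, h0₀, rfl⟩ hε
  exact ⟨w', ht, h0, hlt⟩

lemma wsizex_nonneg (hs : ∀ j, 0 ≤ s j) (x : Fin n → Bool) : 0 ≤ P.wsizex s x := by
  by_cases h : P.eval x
  · rw [P.wsizex_of_eval h]
    exact Real.sInf_nonneg (by rintro _ ⟨w, -, rfl⟩; exact P.sum_cw_mul_nonneg hs w)
  · rw [P.wsizex_of_not_eval h]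
    exact Real.sInf_nonneg (by rintro _ ⟨w', -, -, rfl⟩; exact P.sum_cw_mul_nonneg hs _)

lemma wsizeD_nonneg (hs : ∀ j, 0 ≤ s j) (D : Set (Fin n → Bool)) : 0 ≤ P.wsizeD s D :=
  Real.sSup_nonneg (by rintro _ ⟨x, -, rfl⟩; exact P.wsizex_nonneg hs x)

lemma wsizex_le_wsizeD {D : Set (Fin n → Bool)} (hD : D.Finite) (hx : x ∈ D) :
    P.wsizex s x ≤ P.wsizeD s D :=
  le_csSup ((hD.image (P.wsizex s)).bddAbove.mono (by rintro _ ⟨y, hy, rfl⟩; exact ⟨y, hy, rfl⟩))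
    ⟨x, hx, rfl⟩

lemma wsizeD_le {D : Set (Fin n → Bool)} {r : ℝ} (hr : 0 ≤ r) (h : ∀ x ∈ D, P.wsizex s x ≤ r) :
    P.wsizeD s D ≤ r :=
  Real.sSup_le (by rintro _ ⟨x, hx, rfl⟩; exact h x hx) hr

end WitnessSize

section LabelPart

noncomputable def labelPart (c : Fin P.m → ℂ) (j : Fin n) (b : Bool) :
    EuclideanSpace ℂ (Fin P.m) :=
  WithLp.toLp 2 fun i => if P.label i = some (j, b) then c i else 0

lemma inner_labelPart (c c' : Fin P.m → ℂ) (j : Fin n) (b : Bool) :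
    ⟪P.labelPart c j b, P.labelPart c' j b⟫ =
      ∑ i, if P.label i = some (j, b) then conj (c i) * c' i else 0 := by
  simp +contextual [labelPart, PiLp.inner_apply, apply_ite conj, mul_comm]

lemma norm_labelPart_sq (c : Fin P.m → ℂ) (j : Fin n) (b : Bool) :
    ‖P.labelPart c j b‖ ^ 2 = ∑ i, if P.label i = some (j, b) then ‖c i‖ ^ 2 else 0 := by
  simp [labelPart, EuclideanSpace.norm_sq_eq, apply_ite]

lemma sum_ite_label_le (hs : ∀ j, 0 ≤ s j) (b : Fin n → Bool) (i : Fin P.m) {r : ℝ}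
    (hr : 0 ≤ r) : ∑ j, (if P.label i = some (j, b j) then s j * r else 0) ≤ P.cw s i * r := by
  unfold cw
  cases h : P.label i with
  | none => simp
  | some jb =>
    obtain ⟨j₀, b₀⟩ := jb
    simp only [Option.some_inj, Prod.mk.injEq, ite_and, sum_ite_eq, mem_univ, if_true]
    split_ifs <;> simp [mul_nonneg (hs j₀) hr]

lemma sum_mul_norm_labelPart_le (hs : ∀ j, 0 ≤ s j) (c : Fin P.m → ℂ) (b : Fin n → Bool) :
    ∑ j, s j * ‖P.labelPart c j (b j)‖ ^ 2 ≤ ∑ i, P.cw s i * ‖c i‖ ^ 2 := by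
  simp_rw [norm_labelPart_sq, mul_sum, mul_ite, mul_zero]
  rw [sum_comm]
  exact sum_le_sum fun i _ => P.sum_ite_label_le hs b i (sq_nonneg _)

lemma sum_filter_ite_label {M : Type*} [AddCommMonoid M] {x y : Fin n → Bool} (i : Fin P.m)
    {g : M} (hg : P.avail x i → g = 0) :
    ∑ j ∈ univ.filter (fun j => x j ≠ y j), (if P.label i = some (j, y j) then g else 0) =
      if P.avail y i then g else 0 := by
  by_cases hy : P.avail y i
  · rw [if_pos hy]
    rcases hy with hnone | ⟨j₀, hj₀⟩
    · simp [hnone, hg (Or.inl hnone)]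
    · simp only [hj₀, Option.some_inj, Prod.mk.injEq, ite_and, sum_ite_eq, mem_filter,
        mem_univ, true_and, if_true]
      by_cases hxy : x j₀ = y j₀
      · simp [hxy, hg (Or.inr ⟨j₀, hxy ▸ hj₀⟩)]
      · simp [hxy]
  · rw [if_neg hy]
    exact sum_eq_zero fun j _ => if_neg fun h => hy (Or.inr ⟨j, h⟩)

lemma sum_inner_labelPart_negWitness_posWitness {x y : Fin n → Bool}
    {w' : EuclideanSpace ℂ (Fin P.d)} {w : Fin P.m → ℂ} (ht : ⟪P.target, w'⟫ = 1) (h0 : ∀ i, P.avail x i → ⟪P.input i, w'⟫ = 0)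
    (hw : ∑ i, (if P.avail y i then w i else 0) • P.input i = P.target) :
    ∑ j ∈ univ.filter (fun j => x j ≠ y j),
      ⟪P.labelPart (fun i => ⟪P.input i, w'⟫) j (y j), P.labelPart w j (y j)⟫ = 1 := by
  simp_rw [inner_labelPart]
  rw [sum_comm, sum_congr rfl fun i _ =>
    P.sum_filter_ite_label (y := y) i fun hi => by rw [h0 i hi, map_zero, zero_mul]]
  calc ∑ i, (if P.avail y i then conj ⟪P.input i, w'⟫ * w i else 0)
      = ⟪w', ∑ i, (if P.avail y i then w i else 0) • P.input i⟫ := by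
        rw [inner_sum]
        refine sum_congr rfl fun i _ => ?_
        split_ifs <;> simp [inner_smul_right, inner_conj_symm, mul_comm]
    _ = 1 := by rw [hw, ← inner_conj_symm, ht, map_one]

lemma exists_isFeasibleFamily_le (hs : ∀ j, 0 ≤ s j) {D : Finset (Fin n → Bool)}
    {f : D → Bool} (hP : ∀ x : D, P.eval x.1 ↔ f x = true) {ε : ℝ} (hε : 0 < ε) :
    ∃ v : D → Fin n → EuclideanSpace ℂ (Fin P.m), IsFeasibleFamily f v ∧
      ∀ x, ∑ j, s j * ‖v x j‖ ^ 2 ≤ P.wsizeD s D + ε := by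
  have hcert : ∀ x : D, ∃ c : Fin P.m → ℂ, ∑ i, P.cw s i * ‖c i‖ ^ 2 < P.wsizex s x + ε ∧
      (f x = true → ∑ i, (if P.avail x i then c i else 0) • P.input i = P.target) ∧
      (f x = false → ∃ w', ⟪P.target, w'⟫ = 1 ∧ (∀ i, P.avail x i → ⟪P.input i, w'⟫ = 0) ∧
        c = fun i => ⟪P.input i, w'⟫) := by
    intro x
    cases hfx : f x
    · obtain ⟨w', ht, h0, hlt⟩ := P.exists_negWitness_lt (s := s) (x := x) (by simp [hP, hfx]) hε
      exact ⟨_, hlt, by simp, fun _ => ⟨w', ht, h0, rfl⟩⟩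
    · obtain ⟨w, hw, hlt⟩ := P.exists_posWitness_lt (s := s) ((hP x).2 hfx) hε
      exact ⟨w, hlt, fun _ => hw, by simp⟩
  choose c hcost hpos hneg using hcert
  refine ⟨fun x j => P.labelPart (c x) j (if f x then x.1 j else !x.1 j), fun x y hx hy => ?_,
    fun x => ?_⟩
  · obtain ⟨w', ht, h0, hcx⟩ := hneg x hx
    have hflip : ∀ j ∈ univ.filter (fun j => x.1 j ≠ y.1 j), (!x.1 j) = y.1 j := by
      intro j hj
      exact (Bool.eq_not.2 (Ne.symm (mem_filter.1 hj).2)).symm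
    simp only [hx, hy, if_true, Bool.false_eq_true, if_false,
      EuclideanSpace.real_inner_eq_re_inner, ← Complex.re_sum]
    rw [sum_congr rfl fun j hj => by rw [hflip j hj], hcx,
      P.sum_inner_labelPart_negWitness_posWitness ht h0 (hpos y hy), Complex.one_re]
  · calc ∑ j, s j * ‖P.labelPart (c x) j (if f x then x.1 j else !x.1 j)‖ ^ 2
        ≤ ∑ i, P.cw s i * ‖c x i‖ ^ 2 := P.sum_mul_norm_labelPart_le hs _ _
      _ ≤ P.wsizex s x + ε := (hcost x).le
      _ ≤ P.wsizeD s D + ε := by gcongr; exact P.wsizex_le_wsizeD D.finite_toSet x.2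

end LabelPart

section OfFamily

variable {m : ℕ} {D : Finset (Fin n → Bool)} (f : D → Bool)
  (v : D → Fin n → EuclideanSpace ℝ (Fin m))

noncomputable def ofFamily : SpanProgram n where
  d := Fintype.card D
  m := Fintype.card (Fin n × Bool × Fin m)
  label i := some (((Fintype.equivFin _).symm i).1, ((Fintype.equivFin _).symm i).2.1)
  target := WithLp.toLp 2 fun z => if f ((Fintype.equivFin D).symm z) then 0 else 1
  input i := WithLp.toLp 2 fun z =>
    let x := (Fintype.equivFin D).symm z
    if f x then 0 else blockVec (fun j => !x.1 j) (v x) ((Fintype.equivFin _).symm i)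

/-- Stated with the index types of `ofFamily`, so that lemmas about its inputs and coordinates
typecheck without unfolding it. -/
noncomputable def ofFamilyIndex : Fin (ofFamily f v).m ≃ Fin n × Bool × Fin m :=
  (Fintype.equivFin _).symm

noncomputable def ofFamilyPoint : Fin (ofFamily f v).d ≃ D :=
  (Fintype.equivFin D).symm

variable {f v}

lemma ofFamily_avail {y : Fin n → Bool} {i : Fin (ofFamily f v).m} :
    (ofFamily f v).avail y i ↔ (ofFamilyIndex f v i).2.1 = y (ofFamilyIndex f v i).1 := by
  simp only [avail, ofFamily, ofFamilyIndex, Option.some_inj, reduceCtorEq, false_or,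
    Prod.mk.injEq]
  exact ⟨fun ⟨_, hj, hb⟩ => hj ▸ hb, fun h => ⟨_, rfl, h⟩⟩

lemma ofFamily_cw (i : Fin (ofFamily f v).m) :
    (ofFamily f v).cw s i = s (ofFamilyIndex f v i).1 := rfl

lemma ofFamily_target_apply (z : Fin (ofFamily f v).d) :
    (ofFamily f v).target z = if f (ofFamilyPoint f v z) then 0 else 1 := rfl

lemma ofFamily_input_apply (i : Fin (ofFamily f v).m) (z : Fin (ofFamily f v).d) :
    (ofFamily f v).input i z = if f (ofFamilyPoint f v z) then 0 else
      blockVec (fun j => !(ofFamilyPoint f v z).1 j) (v (ofFamilyPoint f v z))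
        (ofFamilyIndex f v i) := rfl

lemma ofFamily_posWitness (hv : IsFeasibleFamily f v) {y : D} (hy : f y = true) :
    ∑ i, (if (ofFamily f v).avail y i then blockVec y.1 (v y) (ofFamilyIndex f v i) else 0) •
      (ofFamily f v).input i = (ofFamily f v).target := by
  have havail : ∀ i, (if (ofFamily f v).avail y i then
      blockVec y.1 (v y) (ofFamilyIndex f v i) else 0) =
        blockVec y.1 (v y) (ofFamilyIndex f v i) := by
    intro i
    split_ifs with h
    · rfl
    · rw [ofFamily_avail] at h
      simp [blockVec, h]
  simp_rw [havail]
  ext z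
  rw [WithLp.ofLp_sum, Finset.sum_apply]
  simp only [WithLp.ofLp_smul, Pi.smul_apply, smul_eq_mul, ofFamily_input_apply,
    ofFamily_target_apply]
  set x := ofFamilyPoint f v z
  cases hx : f x
  · simp only [Bool.false_eq_true, if_false]
    rw [(ofFamilyIndex f v).sum_comp
        fun p => blockVec y.1 (v y) p * blockVec (fun j => !x.1 j) (v x) p,
      sum_blockVec_mul_blockVec, filter_congr fun j _ => by rw [Bool.eq_not, ne_comm],
      sum_congr rfl fun j _ => by rw [real_inner_comm]]
    exact_mod_cast hv x y hx hy
  · simp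

lemma ofFamily_inner_target_single {x : D} (hx : f x = false) :
    ⟪(ofFamily f v).target, EuclideanSpace.single ((ofFamilyPoint f v).symm x) 1⟫ = 1 := by
  simp [EuclideanSpace.inner_single_right, ofFamily_target_apply, hx]

lemma ofFamily_inner_input_single {x : D} (hx : f x = false) (i : Fin (ofFamily f v).m) :
    ⟪(ofFamily f v).input i, EuclideanSpace.single ((ofFamilyPoint f v).symm x) 1⟫ =
      blockVec (fun j => !x.1 j) (v x) (ofFamilyIndex f v i) := by
  simp [EuclideanSpace.inner_single_right, ofFamily_input_apply, hx, blockVec, apply_ite conj]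

lemma ofFamily_inner_input_single_of_avail {x : D} (hx : f x = false) {i : Fin (ofFamily f v).m}
    (hi : (ofFamily f v).avail x i) :
    ⟪(ofFamily f v).input i, EuclideanSpace.single ((ofFamilyPoint f v).symm x) 1⟫ = 0 := by
  rw [ofFamily_avail] at hi
  simp [ofFamily_inner_input_single hx, blockVec, hi]

lemma ofFamily_eval_iff (hv : IsFeasibleFamily f v) (x : D) :
    (ofFamily f v).eval x ↔ f x = true := by
  cases hx : f x
  · simpa using (ofFamily f v).not_eval_of_negWitness (ofFamily_inner_target_single hx)
      fun _ => ofFamily_inner_input_single_of_avail hx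
  · exact iff_of_true ⟨_, ofFamily_posWitness hv hx⟩ rfl

lemma ofFamily_wsizex_le (hs : ∀ j, 0 ≤ s j) (hv : IsFeasibleFamily f v) (x : D) :
    (ofFamily f v).wsizex s x ≤ ∑ j, s j * ‖v x j‖ ^ 2 := by
  cases hx : f x
  · refine ((ofFamily f v).wsizex_le_of_negWitness hs (ofFamily_inner_target_single hx)
      fun _ => ofFamily_inner_input_single_of_avail hx).trans_eq ?_
    simp_rw [ofFamily_inner_input_single hx, ofFamily_cw]
    rw [(ofFamilyIndex f v).sum_comp fun p => s p.1 * ‖blockVec (fun j => !x.1 j) (v x) p‖ ^ 2,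
      sum_mul_norm_blockVec_sq]
  · refine ((ofFamily f v).wsizex_le_of_posWitness hs (ofFamily_posWitness hv hx)).trans_eq ?_
    simp_rw [ofFamily_cw]
    rw [(ofFamilyIndex f v).sum_comp fun p => s p.1 * ‖blockVec x.1 (v x) p‖ ^ 2,
      sum_mul_norm_blockVec_sq]

lemma ofFamily_wsizeD_le (hs : ∀ j, 0 ≤ s j) (hv : IsFeasibleFamily f v) :
    (ofFamily f v).wsizeD s D ≤ ⨆ x : D, ∑ j, s j * ‖v x j‖ ^ 2 :=
  wsizeD_le _ (Real.iSup_nonneg fun _ => sum_nonneg fun j _ => mul_nonneg (hs j) (sq_nonneg _))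
    fun x hx => (ofFamily_wsizex_le hs hv ⟨x, hx⟩).trans
      (le_ciSup (f := fun y : D => ∑ j, s j * ‖v y j‖ ^ 2) (Set.finite_range _).bddAbove ⟨x, hx⟩)

end OfFamily

end SpanProgram

/-- The optimal span-program witness size for `f : D → {0,1}` with costs `s`
equals the value of the vector program: the infimum over `m ∈ ℕ` and families of real vectors
`v_{x,j} ∈ ℝ^m` satisfying `∑_{j : x_j ≠ y_j} ⟨v_{x,j}, v_{y,j}⟩ = 1` for all `x ∈ F₀`, `y ∈ F₁`,
of `max_{x ∈ D} ∑_j s_j ‖v_{x,j}‖²`. -/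
theorem spanProgram_witness_size_SDP
    (n : ℕ) (D : Finset (Fin n → Bool)) (f : {x // x ∈ D} → Bool)
    (s : Fin n → ℝ) (hs : ∀ j, 0 ≤ s j) :
    sInf { r : ℝ | ∃ P : SpanProgram n,
        (∀ x : {x // x ∈ D}, (P.eval x.1 ↔ f x = true)) ∧ r = P.wsizeD s ↑D }
      =
    sInf { r : ℝ | ∃ (m : ℕ) (v : {x // x ∈ D} → Fin n → EuclideanSpace ℝ (Fin m)),
        (∀ x y : {x // x ∈ D}, f x = false → f y = true →
          ∑ j ∈ Finset.univ.filter (fun j : Fin n => x.1 j ≠ y.1 j),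
            (inner ℝ (v x j) (v y j) : ℝ) = 1) ∧
        r = ⨆ x : {x // x ∈ D}, ∑ j : Fin n, s j * ‖v x j‖ ^ 2 } := by
  obtain ⟨v, hv⟩ := exists_isFeasibleFamily f
  obtain ⟨m₀, v₀, hv₀, -⟩ := hv.exists_euclidean
  apply le_antisymm
  · refine Real.sInf_le_sInf_of_forall_exists_le_add ⟨_, m₀, v₀, hv₀, rfl⟩ ⟨0, ?_⟩ ?_
    · rintro _ ⟨P, -, rfl⟩
      exact P.wsizeD_nonneg hs _
    · rintro _ ⟨m, v, hv, rfl⟩ ε hε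
      exact ⟨_, ⟨_, SpanProgram.ofFamily_eval_iff hv, rfl⟩,
        (SpanProgram.ofFamily_wsizeD_le hs hv).trans (le_add_of_nonneg_right hε.le)⟩
  · refine Real.sInf_le_sInf_of_forall_exists_le_add
      ⟨_, _, SpanProgram.ofFamily_eval_iff hv₀, rfl⟩ ⟨0, ?_⟩ ?_
    · rintro _ ⟨m, v, -, rfl⟩
      exact Real.iSup_nonneg fun x => sum_nonneg fun j _ => mul_nonneg (hs j) (sq_nonneg _)
    · rintro _ ⟨P, hP, rfl⟩ ε hε
      obtain ⟨v, hv, hcost⟩ := P.exists_isFeasibleFamily_le hs hP hε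
      obtain ⟨m, v', hv', hnorm⟩ := hv.exists_euclidean
      refine ⟨_, ⟨m, v', hv', rfl⟩, Real.iSup_le (fun x => ?_) ?_⟩
      · simpa only [hnorm] using hcost x
      · exact add_nonneg (P.wsizeD_nonneg hs _) hε.le
end

section
/- Let V be a finite-dimensional complex inner product space, X a positive semidefinite operator on V, t ∈ V, and X' = X + |t⟩⟨t| (the operator w ↦ X w + ⟨t, w⟩ t). Suppose there exist δ > 0 and a nonzero vector φ in the kernel of X with |⟨t, φ⟩|² ≥ δ ‖φ‖². Then for every ξ ∈ V, δ |⟨t, ξ⟩|² ≤ ‖X' ξ‖². Moreover, if (β) is an orthonormal basis of eigenvectors of X' with eigenvalues λ(β) and ξ is a linear combination of eigenvectors β with λ(β) ≤ κ, then δ |⟨t, ξ⟩|² ≤ κ² ‖ξ‖². -/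
/-!
Since `φ ∈ ker X` and `X` is symmetric, `φ` is orthogonal to the range of `X`, so
`⟪φ, X' ξ⟫ = ⟪t, ξ⟫ ⟪φ, t⟫`, and Cauchy–Schwarz against `φ` gives the first bound.
`X'` is positive, so its eigenvalues lie in `[0, ∞)`; in an eigenbasis of `X'` a combination `ξ`
of eigenvectors with eigenvalues `≤ κ` only has coordinates on basis vectors with eigenvalues in
`[0, κ]`, whence `‖X' ξ‖ ≤ κ ‖ξ‖`.
-/

namespace LinearMap

open scoped InnerProductSpace

variable {𝕜 E : Type*} [RCLike 𝕜] [NormedAddCommGroup E] [InnerProductSpace 𝕜 E]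

theorem norm_inner_mul_norm_inner_le_of_apply_eq_zero {X : E →ₗ[𝕜] E} (hX : X.IsSymmetric)
    {φ : E} (hXφ : X φ = 0) (t ξ : E) :
    ‖⟪t, ξ⟫_𝕜‖ * ‖⟪t, φ⟫_𝕜‖ ≤ ‖φ‖ * ‖X ξ + ⟪t, ξ⟫_𝕜 • t‖ := by
  have hφ_perp : ⟪φ, X ξ + ⟪t, ξ⟫_𝕜 • t⟫_𝕜 = ⟪t, ξ⟫_𝕜 * ⟪φ, t⟫_𝕜 := by
    rw [inner_add_right, inner_smul_right, ← hX, hXφ, inner_zero_left, zero_add]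
  calc ‖⟪t, ξ⟫_𝕜‖ * ‖⟪t, φ⟫_𝕜‖ = ‖⟪φ, X ξ + ⟪t, ξ⟫_𝕜 • t⟫_𝕜‖ := by
        rw [hφ_perp, norm_mul, norm_inner_symm φ t]
    _ ≤ ‖φ‖ * ‖X ξ + ⟪t, ξ⟫_𝕜 • t‖ := norm_inner_le_norm _ _

theorem mul_norm_inner_sq_le_of_apply_eq_zero {X : E →ₗ[𝕜] E} (hX : X.IsSymmetric)
    {φ : E} (hφ : φ ≠ 0) (hXφ : X φ = 0) {t : E} {δ : ℝ}
    (hover : δ * ‖φ‖ ^ 2 ≤ ‖⟪t, φ⟫_𝕜‖ ^ 2) (ξ : E) :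
    δ * ‖⟪t, ξ⟫_𝕜‖ ^ 2 ≤ ‖X ξ + ⟪t, ξ⟫_𝕜 • t‖ ^ 2 := by
  have hφ_pos : 0 < ‖φ‖ ^ 2 := by positivity
  refine le_of_mul_le_mul_left ?_ hφ_pos
  calc ‖φ‖ ^ 2 * (δ * ‖⟪t, ξ⟫_𝕜‖ ^ 2) = ‖⟪t, ξ⟫_𝕜‖ ^ 2 * (δ * ‖φ‖ ^ 2) := by ring
    _ ≤ ‖⟪t, ξ⟫_𝕜‖ ^ 2 * ‖⟪t, φ⟫_𝕜‖ ^ 2 := by gcongr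
    _ = (‖⟪t, ξ⟫_𝕜‖ * ‖⟪t, φ⟫_𝕜‖) ^ 2 := by ring
    _ ≤ (‖φ‖ * ‖X ξ + ⟪t, ξ⟫_𝕜 • t‖) ^ 2 :=
        pow_le_pow_left₀ (by positivity)
          (norm_inner_mul_norm_inner_le_of_apply_eq_zero hX hXφ t ξ) 2
    _ = ‖φ‖ ^ 2 * ‖X ξ + ⟪t, ξ⟫_𝕜 • t‖ ^ 2 := by ring

theorem IsSymmetric.inner_eq_zero_of_mem_span_eigenvectors {T : E →ₗ[𝕜] E} (hT : T.IsSymmetric)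
    {u : E} {ν κ : ℝ} (hu : T u = (ν : 𝕜) • u) (hν : κ < ν) {ξ : E}
    (hξ : ξ ∈ Submodule.span 𝕜 {v : E | ∃ μ : ℝ, μ ≤ κ ∧ T v = (μ : 𝕜) • v}) :
    ⟪u, ξ⟫_𝕜 = 0 := by
  suffices h : Submodule.span 𝕜 {v : E | ∃ μ : ℝ, μ ≤ κ ∧ T v = (μ : 𝕜) • v} ≤ (𝕜 ∙ u)ᗮ from
    (Submodule.mem_orthogonal_singleton_iff_inner_right).mp (h hξ)
  refine Submodule.span_le.mpr fun v ⟨μ, hμ, hv⟩ => ?_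
  rw [SetLike.mem_coe, Submodule.mem_orthogonal_singleton_iff_inner_right]
  have h : ((ν : 𝕜) - μ) * ⟪u, v⟫_𝕜 = 0 := by
    have := hT u v
    rw [hu, hv, inner_smul_left, inner_smul_right, RCLike.conj_ofReal] at this
    rw [sub_mul, this, sub_self]
  exact (mul_eq_zero.mp h).resolve_left (sub_ne_zero.mpr (mod_cast (hμ.trans_lt hν).ne'))

theorem IsPositive.norm_apply_sq_le_of_mem_span_eigenvectors [FiniteDimensional 𝕜 E]
    {T : E →ₗ[𝕜] E} (hT : T.IsPositive) {κ : ℝ} {ξ : E}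
    (hξ : ξ ∈ Submodule.span 𝕜 {v : E | ∃ μ : ℝ, μ ≤ κ ∧ T v = (μ : 𝕜) • v}) :
    ‖T ξ‖ ^ 2 ≤ κ ^ 2 * ‖ξ‖ ^ 2 := by
  set b := hT.isSymmetric.eigenvectorBasis rfl
  rw [← b.sum_sq_norm_inner_right, ← b.sum_sq_norm_inner_right, Finset.mul_sum]
  refine Finset.sum_le_sum fun i _ => ?_
  rw [← b.repr_apply_apply, hT.isSymmetric.eigenvectorBasis_apply_self_apply, b.repr_apply_apply,
    norm_mul, mul_pow, RCLike.norm_ofReal, sq_abs]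
  rcases le_or_gt (hT.isSymmetric.eigenvalues rfl i) κ with hle | hgt
  · gcongr
    exact hT.nonneg_eigenvalues rfl i
  · rw [hT.isSymmetric.inner_eq_zero_of_mem_span_eigenvectors
      (hT.isSymmetric.apply_eigenvectorBasis rfl i) hgt hξ]
    simp

end LinearMap

open scoped ComplexInnerProductSpace

theorem psd_rank_one_overlap_bound_general
    {V : Type} [NormedAddCommGroup V] [InnerProductSpace ℂ V] [FiniteDimensional ℂ V]
    (X : V →ₗ[ℂ] V) (hsym : X.IsSymmetric) (hpsd : ∀ v : V, 0 ≤ (⟪v, X v⟫).re)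
    (t : V) (δ : ℝ)
    (φ : V) (hφ : φ ≠ 0) (hker : X φ = 0)
    (hover : δ * ‖φ‖ ^ 2 ≤ ‖⟪t, φ⟫‖ ^ 2) :
    (∀ ξ : V, δ * ‖⟪t, ξ⟫‖ ^ 2 ≤ ‖X ξ + ⟪t, ξ⟫ • t‖ ^ 2) ∧
    (∀ (κ : ℝ) (ξ : V),
      ξ ∈ Submodule.span ℂ {v : V | ∃ μ : ℝ, μ ≤ κ ∧ X v + ⟪t, v⟫ • t = (μ : ℂ) • v} →
      δ * ‖⟪t, ξ⟫‖ ^ 2 ≤ κ ^ 2 * ‖ξ‖ ^ 2) := by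
  have hbound := LinearMap.mul_norm_inner_sq_le_of_apply_eq_zero hsym hφ hker hover
  have hX : X.IsPositive := ⟨hsym, fun v => hsym v v ▸ hpsd v⟩
  have hY : (X + (InnerProductSpace.rankOne ℂ t t).toLinearMap).IsPositive :=
    hX.add (InnerProductSpace.isPositive_rankOne_self t).toLinearMap
  exact ⟨hbound, fun κ ξ hξ =>
    (hbound ξ).trans (hY.norm_apply_sq_le_of_mem_span_eigenvectors hξ)⟩

/-- Let `X` be a positive semidefinite operator on a finite-dimensional
complex inner product space `V`, `t ∈ V`, and `X' = X + |t⟩⟨t|`, i.e. `X' ξ = X ξ + ⟪t, ξ⟫ • t`.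
If some nonzero `φ ∈ ker X` has `|⟪t, φ⟫|² ≥ δ ‖φ‖²` with `δ > 0`, then
`δ |⟪t, ξ⟫|² ≤ ‖X' ξ‖²` for every `ξ`; moreover if `ξ` is a linear combination of eigenvectors
of `X'` with eigenvalues at most `κ`, then `δ |⟪t, ξ⟫|² ≤ κ² ‖ξ‖²`. -/
theorem psd_rank_one_overlap_bound
    {V : Type} [NormedAddCommGroup V] [InnerProductSpace ℂ V] [FiniteDimensional ℂ V]
    (X : V →ₗ[ℂ] V) (hsym : X.IsSymmetric) (hpsd : ∀ v : V, 0 ≤ (⟪v, X v⟫).re)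
    (t : V) (δ : ℝ) (hδ : 0 < δ)
    (φ : V) (hφ : φ ≠ 0) (hker : X φ = 0)
    (hover : δ * ‖φ‖ ^ 2 ≤ ‖⟪t, φ⟫‖ ^ 2) :
    (∀ ξ : V, δ * ‖⟪t, ξ⟫‖ ^ 2 ≤ ‖X ξ + ⟪t, ξ⟫ • t‖ ^ 2) ∧
    (∀ (κ : ℝ) (ξ : V),
      ξ ∈ Submodule.span ℂ {v : V | ∃ μ : ℝ, μ ≤ κ ∧ X v + ⟪t, v⟫ • t = (μ : ℂ) • v} →
      δ * ‖⟪t, ξ⟫‖ ^ 2 ≤ κ ^ 2 * ‖ξ‖ ^ 2) :=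
  psd_rank_one_overlap_bound_general X hsym hpsd t δ φ hφ hker hover
end

section
/- Let V be a finite-dimensional complex inner product space, X a positive semidefinite operator on V, t ∈ V, and X' = X + |t⟩⟨t| (the operator w ↦ X w + ⟨t, w⟩ t). Let (β) be an orthonormal basis of eigenvectors of X' with eigenvalues λ(β) ≥ 0. Suppose there exist δ > 0 and a nonzero vector φ in the kernel of X with |⟨t, φ⟩|² ≥ δ ‖φ‖². Then every eigenvector β with ⟨t, β⟩ ≠ 0 has λ(β) > 0, and for every Λ ≥ 0, δ · ∑_{β : λ(β) ≤ Λ and ⟨t, β⟩ ≠ 0} |⟨t, β⟩|² / λ(β) ≤ 4Λ. -/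
/-!
Pairing the eigenvalue equation `X β + ⟪t, β⟫ t = λ β` with `β` shows `λ ≥ |⟪t, β⟫|²`, and
pairing it with `φ ∈ ker X` (using that `X` is symmetric) gives `λ ⟪β, φ⟫ = ⟪β, t⟫ ⟪t, φ⟫`.
Hence each term `|⟪t, φ⟫|² |⟪t, β⟫|² / λ` equals `λ |⟪β, φ⟫|² ≤ Λ |⟪β, φ⟫|²`, and Parseval
sums these to `Λ ‖φ‖²`; dividing by `‖φ‖²` and using `δ ‖φ‖² ≤ |⟪t, φ⟫|²` bounds `δ` times the sum.
-/

open scoped ComplexInnerProductSpace InnerProductSpace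

section RankOneEigenvector

variable {𝕜 V : Type*} [RCLike 𝕜] [NormedAddCommGroup V] [InnerProductSpace 𝕜 V]
  {X : V →ₗ[𝕜] V} {t u φ : V} {μ : ℝ}

theorem re_inner_map_add_norm_inner_sq_of_rankOne_eigen
    (h : X u + ⟪t, u⟫_𝕜 • t = (μ : 𝕜) • u) :
    RCLike.re ⟪u, X u⟫_𝕜 + ‖⟪t, u⟫_𝕜‖ ^ 2 = μ * ‖u‖ ^ 2 := by
  have h' := congrArg (fun v => RCLike.re ⟪u, v⟫_𝕜) h
  simp only [inner_add_right, inner_smul_right, ← inner_conj_symm u t, RCLike.mul_conj,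
    inner_self_eq_norm_sq_to_K, map_add] at h'
  norm_cast at h'

theorem norm_inner_sq_le_of_rankOne_eigen (hpsd : ∀ v, 0 ≤ RCLike.re ⟪v, X v⟫_𝕜)
    (h : X u + ⟪t, u⟫_𝕜 • t = (μ : 𝕜) • u) :
    ‖⟪t, u⟫_𝕜‖ ^ 2 ≤ μ * ‖u‖ ^ 2 := by
  linarith [re_inner_map_add_norm_inner_sq_of_rankOne_eigen h, hpsd u]

theorem eigenvalue_mul_inner_of_rankOne_eigen_of_mem_ker (hsym : X.IsSymmetric) (hφ : X φ = 0)
    (h : X u + ⟪t, u⟫_𝕜 • t = (μ : 𝕜) • u) :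
    (μ : 𝕜) * ⟪u, φ⟫_𝕜 = ⟪u, t⟫_𝕜 * ⟪t, φ⟫_𝕜 := by
  have h' := congrArg (fun v => ⟪v, φ⟫_𝕜) h
  simp only [inner_add_left, hsym u φ, hφ, inner_zero_right, inner_smul_left, RCLike.conj_ofReal,
    inner_conj_symm, zero_add] at h'
  exact h'.symm

theorem norm_inner_sq_mul_div_le_of_rankOne_eigen_of_mem_ker (hsym : X.IsSymmetric)
    (hφ : X φ = 0) (h : X u + ⟪t, u⟫_𝕜 • t = (μ : 𝕜) • u) {Λ : ℝ} (hμ : 0 < μ) (hμΛ : μ ≤ Λ) :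
    ‖⟪t, φ⟫_𝕜‖ ^ 2 * (‖⟪t, u⟫_𝕜‖ ^ 2 / μ) ≤ Λ * ‖⟪u, φ⟫_𝕜‖ ^ 2 := by
  have hnorm : μ * ‖⟪u, φ⟫_𝕜‖ = ‖⟪t, u⟫_𝕜‖ * ‖⟪t, φ⟫_𝕜‖ := by
    simpa [norm_mul, abs_of_pos hμ, norm_inner_symm u t] using
      congrArg norm (eigenvalue_mul_inner_of_rankOne_eigen_of_mem_ker hsym hφ h)
  have heq : ‖⟪t, φ⟫_𝕜‖ ^ 2 * (‖⟪t, u⟫_𝕜‖ ^ 2 / μ) = μ * ‖⟪u, φ⟫_𝕜‖ ^ 2 := by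
    field_simp
    linear_combination -(μ * ‖⟪u, φ⟫_𝕜‖ + ‖⟪t, u⟫_𝕜‖ * ‖⟪t, φ⟫_𝕜‖) * hnorm
  rw [heq]
  gcongr

end RankOneEigenvector

open Classical in
theorem psd_rank_one_spectral_sum_bound_general
    {V : Type} [NormedAddCommGroup V] [InnerProductSpace ℂ V]
    (X : V →ₗ[ℂ] V) (hsym : X.IsSymmetric) (hpsd : ∀ v : V, 0 ≤ (⟪v, X v⟫).re)
    (t : V) (δ : ℝ)
    (φ : V) (hφ : φ ≠ 0) (hker : X φ = 0)
    (hover : δ * ‖φ‖ ^ 2 ≤ ‖⟪t, φ⟫‖ ^ 2)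
    {ι : Type} [Fintype ι] (b : OrthonormalBasis ι ℂ V) (lam : ι → ℝ)
    (heig : ∀ i, X (b i) + ⟪t, b i⟫ • t = (lam i : ℂ) • b i) :
    (∀ i, ⟪t, b i⟫ ≠ 0 → 0 < lam i) ∧
    ∀ Λ : ℝ, 0 ≤ Λ →
      δ * ∑ i, (if lam i ≤ Λ ∧ ⟪t, b i⟫ ≠ 0 then ‖⟪t, b i⟫‖ ^ 2 / lam i else 0) ≤ 4 * Λ := by
  have hpos : ∀ i, ⟪t, b i⟫ ≠ 0 → 0 < lam i := fun i hti => by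
    have hle := norm_inner_sq_le_of_rankOne_eigen hpsd (heig i)
    rw [b.norm_eq_one i, one_pow, mul_one] at hle
    exact (by positivity : 0 < ‖⟪t, b i⟫‖ ^ 2).trans_le hle
  refine ⟨hpos, fun Λ hΛ => ?_⟩
  set S := ∑ i, (if lam i ≤ Λ ∧ ⟪t, b i⟫ ≠ 0 then ‖⟪t, b i⟫‖ ^ 2 / lam i else 0)
  have hS : 0 ≤ S := Finset.sum_nonneg fun i _ => by
    split_ifs with hc
    · exact div_nonneg (sq_nonneg _) (hpos i hc.2).le
    · rfl
  have hbound : ‖⟪t, φ⟫‖ ^ 2 * S ≤ Λ * ‖φ‖ ^ 2 := by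
    rw [Finset.mul_sum, ← b.sum_sq_norm_inner_right φ, Finset.mul_sum]
    refine Finset.sum_le_sum fun i _ => ?_
    split_ifs with hc
    · exact norm_inner_sq_mul_div_le_of_rankOne_eigen_of_mem_ker hsym hker (heig i)
        (hpos i hc.2) hc.1
    · rw [mul_zero]
      positivity
  have hδS : δ * S * ‖φ‖ ^ 2 ≤ Λ * ‖φ‖ ^ 2 := calc
    δ * S * ‖φ‖ ^ 2 = δ * ‖φ‖ ^ 2 * S := by ring
    _ ≤ ‖⟪t, φ⟫‖ ^ 2 * S := by gcongr
    _ ≤ Λ * ‖φ‖ ^ 2 := hbound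
  linarith [le_of_mul_le_mul_right hδS (by positivity : 0 < ‖φ‖ ^ 2)]

open Classical in
/-- With `X` positive semidefinite on finite-dimensional `V`, `t ∈ V`,
`X' = X + |t⟩⟨t|`, and `(b i)` an orthonormal eigenbasis of `X'` with eigenvalues `λ i ≥ 0`:
if some nonzero `φ ∈ ker X` satisfies `|⟪t, φ⟫|² ≥ δ ‖φ‖²` with `δ > 0`, then every eigenvector
with `⟪t, b i⟫ ≠ 0` has a strictly positive eigenvalue, and for every `Λ ≥ 0`,
`δ ∑_{i : λ i ≤ Λ, ⟪t, b i⟫ ≠ 0} |⟪t, b i⟫|² / λ i ≤ 4Λ`. -/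
theorem psd_rank_one_spectral_sum_bound
    {V : Type} [NormedAddCommGroup V] [InnerProductSpace ℂ V] [FiniteDimensional ℂ V]
    (X : V →ₗ[ℂ] V) (hsym : X.IsSymmetric) (hpsd : ∀ v : V, 0 ≤ (⟪v, X v⟫).re)
    (t : V) (δ : ℝ) (hδ : 0 < δ)
    (φ : V) (hφ : φ ≠ 0) (hker : X φ = 0)
    (hover : δ * ‖φ‖ ^ 2 ≤ ‖⟪t, φ⟫‖ ^ 2)
    {ι : Type} [Fintype ι] (b : OrthonormalBasis ι ℂ V) (lam : ι → ℝ)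
    (hlam : ∀ i, 0 ≤ lam i)
    (heig : ∀ i, X (b i) + ⟪t, b i⟫ • t = (lam i : ℂ) • b i) :
    (∀ i, ⟪t, b i⟫ ≠ 0 → 0 < lam i) ∧
    ∀ Λ : ℝ, 0 ≤ Λ →
      δ * ∑ i, (if lam i ≤ Λ ∧ ⟪t, b i⟫ ≠ 0 then ‖⟪t, b i⟫‖ ^ 2 / lam i else 0) ≤ 4 * Λ :=
  psd_rank_one_spectral_sum_bound_general X hsym hpsd t δ φ hφ hker hover b lam heig
end

section
/- Let T and U be finite sets and B : ℂ^U → ℂ^T a linear map. Let A_G be the self-adjoint operator on ℂ^T ⊕ ℂ^U given by A_G(ψ_T, ψ_U) = (B ψ_U, B† ψ_T). Suppose there exist δ > 0, a vector t ∈ ℂ^T, and a nonzero ψ = (ψ_T, ψ_U) ∈ ℂ^T ⊕ ℂ^U with A_G ψ = 0 and |⟨t, ψ_T⟩|² ≥ δ ‖ψ‖². Let A_{G'} be the self-adjoint operator on ℂ^T ⊕ (ℂ ⊕ ℂ^U) given by A_{G'}(ψ_T, (ψ_0, ψ_U)) = (ψ_0 t + B ψ_U, (⟨t, ψ_T⟩,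 B† ψ_T)), and let e_0 = (0, (1, 0)) be the unit vector on the new coordinate. Let (α) be an orthonormal basis of eigenvectors of A_{G'} with eigenvalues ρ(α). Then for every Υ ≥ 0, ∑_{α : |ρ(α)| ≤ Υ} |⟨α, e_0⟩|² ≤ 8Υ²/δ. In particular (the case Υ = 0), A_{G'} has no eigenvalue-zero eigenvector with nonzero overlap with e_0. -/
open scoped ComplexInnerProductSpace
open Matrix

/-- The biadjacency matrix of the graph `G'`: the matrix `B` with the column `t` adjoined. -/
noncomputable def biadjExt {T U : Type} (B : Matrix T U ℂ) (t : EuclideanSpace ℂ T) :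
    Matrix T (Unit ⊕ U) ℂ :=
  Matrix.of fun i j => Sum.elim (fun _ => t i) (fun u => B i u) j

/-- The weighted adjacency matrix of the bipartite graph `G'` with biadjacency matrix
`[t | B]`. -/
noncomputable def adjExt {T U : Type} (B : Matrix T U ℂ) (t : EuclideanSpace ℂ T) :
    Matrix (T ⊕ (Unit ⊕ U)) (T ⊕ (Unit ⊕ U)) ℂ :=
  Matrix.fromBlocks 0 (biadjExt B t) (biadjExt B t)ᴴ 0

open scoped InnerProductSpace

/-!
Let `φ = (ψ_T, 0, ψ_U)`, the zero eigenvector of `A_G` padded by `0` on the new vertex. Since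
`Bψ_U = 0` and `B†ψ_T = 0`, we get `A_{G'} φ = ⟪t, ψ_T⟫ e₀`. Pairing with an eigenvector `α` and
using self-adjointness gives `⟪t, ψ_T⟫ ⟪α, e₀⟫ = ρ(α) ⟪α, φ⟫`, so on eigenvalues with
`|ρ(α)| ≤ Υ` the overlap with `e₀` is controlled by the overlap with `φ`. Summing and using
Parseval, `|⟪t, ψ_T⟫|² ∑ |⟪α, e₀⟫|² ≤ Υ² ‖φ‖² ≤ Υ² |⟪t, ψ_T⟫|² / δ`.
-/

namespace LinearMap.IsSymmetric

variable {𝕜 E : Type*} [RCLike 𝕜] [NormedAddCommGroup E] [InnerProductSpace 𝕜 E]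
  {A : E →ₗ[𝕜] E}

theorem mul_inner_eq_of_apply_eq_smul (hA : A.IsSymmetric) {v φ e : E} {ρ : ℝ} {c : 𝕜}
    (hv : A v = (ρ : 𝕜) • v) (hφ : A φ = c • e) :
    c * ⟪v, e⟫_𝕜 = ρ * ⟪v, φ⟫_𝕜 := by
  have h := hA v φ
  rwa [hφ, hv, inner_smul_right, inner_smul_left, RCLike.conj_ofReal, eq_comm] at h

theorem norm_sq_mul_sum_sq_norm_inner_le {ι : Type*} [Fintype ι] (hA : A.IsSymmetric)
    (b : OrthonormalBasis ι 𝕜 E) {ρ : ι → ℝ} (hb : ∀ α, A (b α) = (ρ α : 𝕜) • b α)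
    {φ e : E} {c : 𝕜} (hφ : A φ = c • e) (Υ : ℝ) :
    ‖c‖ ^ 2 * ∑ α, (if |ρ α| ≤ Υ then ‖⟪b α, e⟫_𝕜‖ ^ 2 else 0) ≤ Υ ^ 2 * ‖φ‖ ^ 2 := by
  rw [← b.sum_sq_norm_inner_right φ, Finset.mul_sum, Finset.mul_sum]
  refine Finset.sum_le_sum fun α _ => ?_
  split_ifs with hρ
  · have hsq : ρ α ^ 2 ≤ Υ ^ 2 := by
      rw [← sq_abs]
      exact pow_le_pow_left₀ (abs_nonneg _) hρ 2
    calc ‖c‖ ^ 2 * ‖⟪b α, e⟫_𝕜‖ ^ 2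
        = ρ α ^ 2 * ‖⟪b α, φ⟫_𝕜‖ ^ 2 := by
          rw [← mul_pow, ← norm_mul, hA.mul_inner_eq_of_apply_eq_smul (hb α) hφ, norm_mul,
            RCLike.norm_ofReal, mul_pow, sq_abs]
      _ ≤ Υ ^ 2 * ‖⟪b α, φ⟫_𝕜‖ ^ 2 := by gcongr
  · rw [mul_zero]
    positivity

end LinearMap.IsSymmetric

section AdjExt

variable {T U : Type}

noncomputable def insertZero [Fintype T] [Fintype U]
    (ψT : EuclideanSpace ℂ T) (ψU : EuclideanSpace ℂ U) :
    EuclideanSpace ℂ (T ⊕ (Unit ⊕ U)) :=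
  WithLp.toLp 2 (Sum.elim ψT.ofLp (Sum.elim 0 ψU.ofLp))

theorem norm_sq_insertZero [Fintype T] [Fintype U]
    (ψT : EuclideanSpace ℂ T) (ψU : EuclideanSpace ℂ U) :
    ‖insertZero ψT ψU‖ ^ 2 = ‖ψT‖ ^ 2 + ‖ψU‖ ^ 2 := by
  simp [EuclideanSpace.norm_sq_eq, insertZero, Fintype.sum_sum_type]

theorem adjExt_isHermitian (B : Matrix T U ℂ) (t : EuclideanSpace ℂ T) :
    (adjExt B t).IsHermitian := by
  simp [Matrix.IsHermitian, adjExt, Matrix.fromBlocks_conjTranspose]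

theorem toEuclideanLin_adjExt_insertZero [Fintype T] [DecidableEq T] [Fintype U]
    [DecidableEq U] {B : Matrix T U ℂ} (t : EuclideanSpace ℂ T)
    {ψT : EuclideanSpace ℂ T} {ψU : EuclideanSpace ℂ U}
    (hψU : Matrix.toEuclideanLin B ψU = 0) (hψT : Matrix.toEuclideanLin Bᴴ ψT = 0) :
    Matrix.toEuclideanLin (adjExt B t) (insertZero ψT ψU) =
      ⟪t, ψT⟫ • EuclideanSpace.single (Sum.inr (Sum.inl ())) (1 : ℂ) := by
  have hU : B *ᵥ ψU.ofLp = 0 := by simpa using congrArg WithLp.ofLp hψU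
  have hT : Bᴴ *ᵥ ψT.ofLp = 0 := by simpa using congrArg WithLp.ofLp hψT
  ext (i | _ | u)
  · simpa [adjExt, biadjExt, insertZero, mulVec, dotProduct, Fintype.sum_sum_type]
      using congrFun hU i
  · simp [adjExt, biadjExt, insertZero, mulVec, dotProduct, Fintype.sum_sum_type,
      EuclideanSpace.inner_eq_star_dotProduct, mul_comm]
  · simpa [adjExt, biadjExt, insertZero, mulVec, dotProduct, Fintype.sum_sum_type]
      using congrFun hT u

end AdjExt

theorem bipartite_effective_spectral_gap_general
    {T U : Type} [Fintype T] [DecidableEq T] [Fintype U] [DecidableEq U]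
    (B : Matrix T U ℂ) (t : EuclideanSpace ℂ T) (δ : ℝ) (hδ : 0 < δ)
    (ψT : EuclideanSpace ℂ T) (ψU : EuclideanSpace ℂ U)
    (hker₁ : Matrix.toEuclideanLin B ψU = 0)
    (hker₂ : Matrix.toEuclideanLin Bᴴ ψT = 0)
    (hne : ¬(ψT = 0 ∧ ψU = 0))
    (hover : δ * (‖ψT‖ ^ 2 + ‖ψU‖ ^ 2) ≤ ‖⟪t, ψT⟫‖ ^ 2)
    {ι : Type} [Fintype ι]
    (b : OrthonormalBasis ι ℂ (EuclideanSpace ℂ (T ⊕ (Unit ⊕ U)))) (ρ : ι → ℝ)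
    (heig : ∀ α, Matrix.toEuclideanLin (adjExt B t) (b α) = (ρ α : ℂ) • b α)
    (Υ : ℝ) :
    ∑ α, (if |ρ α| ≤ Υ then
        ‖⟪b α, EuclideanSpace.single (Sum.inr (Sum.inl ())) (1 : ℂ)⟫‖ ^ 2 else 0)
      ≤ 8 * Υ ^ 2 / δ := by
  set S := ∑ α, (if |ρ α| ≤ Υ then
    ‖⟪b α, EuclideanSpace.single (Sum.inr (Sum.inl ())) (1 : ℂ)⟫‖ ^ 2 else 0)
  have hS : ‖⟪t, ψT⟫‖ ^ 2 * S ≤ Υ ^ 2 * (‖ψT‖ ^ 2 + ‖ψU‖ ^ 2) := by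
    rw [← norm_sq_insertZero]
    have hA := isSymmetric_toEuclideanLin_iff.mpr (adjExt_isHermitian B t)
    exact hA.norm_sq_mul_sum_sq_norm_inner_le b heig
      (toEuclideanLin_adjExt_insertZero t hker₁ hker₂) Υ
  have hψ : 0 < ‖ψT‖ ^ 2 + ‖ψU‖ ^ 2 := by
    rcases not_and_or.mp hne with hT | hU
    · have := norm_pos_iff.mpr hT; positivity
    · have := norm_pos_iff.mpr hU; positivity
  have hS₀ : 0 ≤ S := Finset.sum_nonneg fun α _ => by positivity
  have hSδ : S * δ ≤ Υ ^ 2 := by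
    refine le_of_mul_le_mul_right ?_ hψ
    calc S * δ * (‖ψT‖ ^ 2 + ‖ψU‖ ^ 2) ≤ S * ‖⟪t, ψT⟫‖ ^ 2 := by
          rw [mul_assoc]; exact mul_le_mul_of_nonneg_left hover hS₀
      _ ≤ Υ ^ 2 * (‖ψT‖ ^ 2 + ‖ψU‖ ^ 2) := by rwa [mul_comm]
  rw [le_div_iff₀ hδ]
  linarith [sq_nonneg Υ]

/-- If the weighted adjacency operator `A_G` of a bipartite graph with
biadjacency matrix `B` has an eigenvalue-zero eigenvector `ψ = (ψ_T, ψ_U)` with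
`|⟪t, ψ_T⟫|² ≥ δ ‖ψ‖²`, then adjoining an output vertex with edge weights `t` yields an
effective spectral gap: for any orthonormal eigenbasis `(b α)` of `A_{G'}` with eigenvalues
`ρ α` and any `Υ ≥ 0`, the squared overlap of the output vertex with eigenvectors of
eigenvalue at most `Υ` in magnitude is at most `8Υ²/δ`. -/
theorem bipartite_effective_spectral_gap
    {T U : Type} [Fintype T] [DecidableEq T] [Fintype U] [DecidableEq U]
    (B : Matrix T U ℂ) (t : EuclideanSpace ℂ T) (δ : ℝ) (hδ : 0 < δ)
    (ψT : EuclideanSpace ℂ T) (ψU : EuclideanSpace ℂ U)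
    (hker₁ : Matrix.toEuclideanLin B ψU = 0)
    (hker₂ : Matrix.toEuclideanLin Bᴴ ψT = 0)
    (hne : ¬(ψT = 0 ∧ ψU = 0))
    (hover : δ * (‖ψT‖ ^ 2 + ‖ψU‖ ^ 2) ≤ ‖⟪t, ψT⟫‖ ^ 2)
    {ι : Type} [Fintype ι]
    (b : OrthonormalBasis ι ℂ (EuclideanSpace ℂ (T ⊕ (Unit ⊕ U)))) (ρ : ι → ℝ)
    (heig : ∀ α, Matrix.toEuclideanLin (adjExt B t) (b α) = (ρ α : ℂ) • b α)
    (Υ : ℝ) (hΥ : 0 ≤ Υ) :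
    ∑ α, (if |ρ α| ≤ Υ then
        ‖⟪b α, EuclideanSpace.single (Sum.inr (Sum.inl ())) (1 : ℂ)⟫‖ ^ 2 else 0)
      ≤ 8 * Υ ^ 2 / δ :=
  bipartite_effective_spectral_gap_general B t δ hδ ψT ψU hker₁ hker₂ hne hover b ρ heig Υ
end

section
/- For every span program P on n boolean variables there exists a strict span program P' on n boolean variables (i.e., one with no free input vectors: I_free = ∅) such that f_{P'}(x) = f_P(x) and wsize_s(P', x) = wsize_s(P, x) for every x ∈ {0,1}^n and every cost vector s ∈ [0,∞)^n. -/
/-!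
Let `K` be the span of the free input vectors and `Q` the orthogonal projection onto `Kᗮ`. The
strict program keeps only the labeled input vectors and applies `Q` to them and to the target.

`Q` maps a positive witness of `P` to one of the strict program. Conversely, a positive witness of
the strict program solves the equation for `P` up to an error in `ker Q = K`, which the free input
vectors, available on every input, absorb. A negative witness of `P` is orthogonal to the free
vectors, hence fixed by `Q`, so it is one for the strict program as well; conversely `Q` maps
negative witnesses of the strict program to ones of `P`, since `⟪Q v, w⟫ = ⟪v, Q w⟫`. Free
coordinates cost nothing, so in all four cases the cost is unchanged: the sets of witness costs,
hence the computed function and the witness sizes, coincide.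
-/

open scoped ComplexInnerProductSpace

namespace SpanProgram

variable {n : ℕ} (P : SpanProgram n)

section Projection

def freeSpan : Submodule ℂ (EuclideanSpace ℂ (Fin P.d)) :=
  Submodule.span ℂ (Set.range fun i : {i // P.label i = none} => P.input i)

noncomputable def proj : EuclideanSpace ℂ (Fin P.d) →L[ℂ] EuclideanSpace ℂ (Fin P.d) :=
  P.freeSpanᗮ.starProjection

theorem proj_eq_zero_iff {v : EuclideanSpace ℂ (Fin P.d)} : P.proj v = 0 ↔ v ∈ P.freeSpan := by
  rw [proj, Submodule.starProjection_apply_eq_zero_iff, Submodule.orthogonal_orthogonal]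

theorem proj_input_of_label_eq_none {i : Fin P.m} (hi : P.label i = none) :
    P.proj (P.input i) = 0 :=
  P.proj_eq_zero_iff.2 (Submodule.subset_span ⟨⟨i, hi⟩, rfl⟩)

theorem inner_proj_left (u v : EuclideanSpace ℂ (Fin P.d)) : ⟪P.proj u, v⟫ = ⟪u, P.proj v⟫ :=
  Submodule.inner_starProjection_left_eq_right _ u v

theorem proj_eq_self_of_inner_free_eq_zero {w : EuclideanSpace ℂ (Fin P.d)}
    (hw : ∀ i, P.label i = none → ⟪P.input i, w⟫ = 0) : P.proj w = w := by
  refine Submodule.starProjection_eq_self_iff.2 <|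
    Submodule.IsOrtho.ge ?_ (Submodule.mem_span_singleton_self w)
  rw [freeSpan, Submodule.isOrtho_span]
  rintro _ ⟨i, rfl⟩ _ rfl
  exact hw i i.2

end Projection

section Witness

variable (x : Fin n → Bool)

def IsPosWitness (w : Fin P.m → ℂ) : Prop :=
  ∑ i, (if P.avail x i then w i else 0) • P.input i = P.target

def IsNegWitness (w : EuclideanSpace ℂ (Fin P.d)) : Prop :=
  ⟪P.target, w⟫ = 1 ∧ ∀ i, P.avail x i → ⟪P.input i, w⟫ = 0

def posCosts (s : Fin n → ℝ) : Set ℝ :=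
  {r | ∃ w, P.IsPosWitness x w ∧ r = ∑ i, P.cw s i * ‖w i‖ ^ 2}

def negCosts (s : Fin n → ℝ) : Set ℝ :=
  {r | ∃ w, P.IsNegWitness x w ∧ r = ∑ i, P.cw s i * ‖⟪P.input i, w⟫‖ ^ 2}

open Classical in
theorem wsizex_eq_ite (s : Fin n → ℝ) :
    P.wsizex s x = if P.eval x then sInf (P.posCosts x s) else sInf (P.negCosts x s) := by
  simp only [wsizex, posCosts, negCosts, IsPosWitness, IsNegWitness, and_assoc]

theorem eval_iff_posCosts_nonempty (s : Fin n → ℝ) : P.eval x ↔ (P.posCosts x s).Nonempty :=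
  ⟨fun ⟨w, hw⟩ => ⟨_, w, hw, rfl⟩, fun ⟨_, w, hw, _⟩ => ⟨w, hw⟩⟩

end Witness

section Strictify

abbrev Labeled : Type := {i : Fin P.m // P.label i ≠ none}

noncomputable def labeledEquiv : Fin (Fintype.card P.Labeled) ≃ P.Labeled :=
  (Fintype.equivFin _).symm

-- Reducible so that `Fin P.strictify.m` and `Fin (Fintype.card P.Labeled)` unify in `rw`, `simp`.
@[reducible] noncomputable def strictify : SpanProgram n where
  d := P.d
  m := Fintype.card P.Labeled
  label k := P.label (P.labeledEquiv k)
  target := P.proj P.target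
  input k := P.proj (P.input (P.labeledEquiv k))

theorem strictify_label_ne_none (k : Fin P.strictify.m) : P.strictify.label k ≠ none :=
  (P.labeledEquiv k).2

theorem sum_comp_labeledEquiv {M : Type*} [AddCommMonoid M] (f : Fin P.m → M)
    (hf : ∀ i, P.label i = none → f i = 0) :
    ∑ k : Fin P.strictify.m, f (P.labeledEquiv k) = ∑ i, f i := by
  rw [Finset.sum_congr_set {i | P.label i ≠ none} f (fun i => f i) (fun _ _ => rfl)
    fun i hi => hf i (not_not.1 hi)]
  exact Equiv.sum_comp P.labeledEquiv fun i => f i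

theorem sum_strictify_cw_mul (s : Fin n → ℝ) (g : Fin P.m → ℝ) :
    ∑ k, P.strictify.cw s k * g (P.labeledEquiv k) = ∑ i, P.cw s i * g i :=
  P.sum_comp_labeledEquiv (fun i => P.cw s i * g i) fun i hi => by simp [cw, hi]

theorem strictify_combination_eq_proj (x : Fin n → Bool) (u : Fin P.m → ℂ) :
    ∑ k, (if P.strictify.avail x k then u (P.labeledEquiv k) else 0) • P.strictify.input k =
      P.proj (∑ i, (if P.avail x i then u i else 0) • P.input i) := by
  rw [map_sum, ← P.sum_comp_labeledEquiv _ fun i hi => by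
    rw [map_smul, P.proj_input_of_label_eq_none hi, smul_zero]]
  simp only [map_smul]
  rfl

theorem inner_strictify_input (k : Fin P.strictify.m) (w : EuclideanSpace ℂ (Fin P.d)) :
    ⟪P.strictify.input k, w⟫ = ⟪P.input (P.labeledEquiv k), P.proj w⟫ :=
  P.inner_proj_left _ w

theorem exists_isPosWitness_of_proj {x : Fin n → Bool} {u : Fin P.m → ℂ}
    (hu : P.proj (∑ i, (if P.avail x i then u i else 0) • P.input i) = P.proj P.target) :
    ∃ w, P.IsPosWitness x w ∧ ∀ i, P.label i ≠ none → w i = u i := by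
  classical
  set A := ∑ i, (if P.avail x i then u i else 0) • P.input i
  obtain ⟨c, hc⟩ := (Submodule.mem_span_range_iff_exists_fun ℂ).1
    (P.proj_eq_zero_iff.1 (by rw [map_sub, hu, sub_self]) : P.target - A ∈ P.freeSpan)
  set g : Fin P.m → ℂ := Function.extend Subtype.val c 0
  have hg_free {i : Fin P.m} (hi : P.label i = none) : g i = c ⟨i, hi⟩ :=
    Subtype.val_injective.extend_apply c 0 ⟨i, hi⟩
  have hg_labeled {i : Fin P.m} (hi : P.label i ≠ none) : g i = 0 :=
    Function.extend_apply' _ _ _ (by rintro ⟨j, rfl⟩; exact hi j.2)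
  have hg_sum : ∑ i, (if P.avail x i then g i else 0) • P.input i = P.target - A := by
    rw [← hc]
    refine Finset.sum_congr_set {i | P.label i = none} _ (fun j => c j • P.input j)
      (fun i hi => by rw [if_pos (show P.avail x i from Or.inl hi), hg_free hi]) fun i hi => ?_
    rw [hg_labeled hi, ite_self, zero_smul]
  refine ⟨u + g, ?_, fun i hi => by rw [Pi.add_apply, hg_labeled hi, add_zero]⟩
  have hsplit : ∀ i, (if P.avail x i then (u + g) i else 0) • P.input i =
      (if P.avail x i then u i else 0) • P.input i + (if P.avail x i then g i else 0) • P.input i :=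
    fun i => by split_ifs <;> simp [add_smul]
  rw [IsPosWitness, Finset.sum_congr rfl fun i _ => hsplit i, Finset.sum_add_distrib, hg_sum,
    add_sub_cancel]

theorem isPosWitness_strictify {x : Fin n → Bool} {w : Fin P.m → ℂ} (hw : P.IsPosWitness x w) :
    P.strictify.IsPosWitness x fun k => w (P.labeledEquiv k) := by
  rw [IsPosWitness, strictify_combination_eq_proj, hw]

theorem exists_isPosWitness_of_strictify {x : Fin n → Bool} {c : Fin P.strictify.m → ℂ}
    (hc : P.strictify.IsPosWitness x c) :
    ∃ w, P.IsPosWitness x w ∧ ∀ k, w (P.labeledEquiv k) = c k := by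
  classical
  set u : Fin P.m → ℂ := Function.extend (fun k => (P.labeledEquiv k : Fin P.m)) c 0
  have hu (k : Fin P.strictify.m) : u (P.labeledEquiv k) = c k :=
    (Subtype.val_injective.comp P.labeledEquiv.injective).extend_apply c 0 k
  obtain ⟨w, hw, hwu⟩ := P.exists_isPosWitness_of_proj (x := x) (u := u) <| by
    rw [← strictify_combination_eq_proj]
    simp_rw [hu]
    exact hc
  exact ⟨w, hw, fun k => (hwu _ (P.labeledEquiv k).2).trans (hu k)⟩

theorem posCosts_strictify (x : Fin n → Bool) (s : Fin n → ℝ) :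
    P.strictify.posCosts x s = P.posCosts x s := by
  ext r
  constructor
  · rintro ⟨c, hc, rfl⟩
    obtain ⟨w, hw, hwc⟩ := P.exists_isPosWitness_of_strictify hc
    refine ⟨w, hw, ?_⟩
    simp_rw [← hwc]
    exact P.sum_strictify_cw_mul s fun i => ‖w i‖ ^ 2
  · rintro ⟨w, hw, rfl⟩
    exact ⟨_, P.isPosWitness_strictify hw, (P.sum_strictify_cw_mul s fun i => ‖w i‖ ^ 2).symm⟩

variable {P} {x : Fin n → Bool} {w : EuclideanSpace ℂ (Fin P.d)}

theorem IsNegWitness.proj_eq (hw : P.IsNegWitness x w) : P.proj w = w :=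
  P.proj_eq_self_of_inner_free_eq_zero fun i hi => hw.2 i (Or.inl hi)

theorem IsNegWitness.strictify (hw : P.IsNegWitness x w) : P.strictify.IsNegWitness x w :=
  ⟨(P.inner_proj_left _ _).trans (by rw [hw.proj_eq]; exact hw.1),
    fun k hk => by rw [inner_strictify_input, hw.proj_eq]; exact hw.2 _ hk⟩

theorem IsNegWitness.of_strictify (hw : P.strictify.IsNegWitness x w) :
    P.IsNegWitness x (P.proj w) := by
  refine ⟨(P.inner_proj_left _ _).symm.trans hw.1, fun i hi => ?_⟩
  by_cases hfree : P.label i = none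
  · rw [← P.inner_proj_left, P.proj_input_of_label_eq_none hfree, inner_zero_left]
  · obtain ⟨k, rfl⟩ : ∃ k, (P.labeledEquiv k : Fin P.m) = i :=
      ⟨P.labeledEquiv.symm ⟨i, hfree⟩, by rw [Equiv.apply_symm_apply]⟩
    rw [← inner_strictify_input]
    exact hw.2 k hi

variable (P)

theorem negCosts_strictify (x : Fin n → Bool) (s : Fin n → ℝ) :
    P.strictify.negCosts x s = P.negCosts x s := by
  ext r
  constructor
  · rintro ⟨w, hw, rfl⟩
    refine ⟨P.proj w, hw.of_strictify, ?_⟩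
    simp only [P.inner_proj_left]
    exact P.sum_strictify_cw_mul s fun i => ‖⟪P.input i, P.proj w⟫‖ ^ 2
  · rintro ⟨w, hw, rfl⟩
    refine ⟨w, hw.strictify, ?_⟩
    simp only [P.inner_proj_left, hw.proj_eq]
    exact (P.sum_strictify_cw_mul s fun i => ‖⟪P.input i, w⟫‖ ^ 2).symm

end Strictify

end SpanProgram

/-- Every span program is equivalent to a strict one (no free input
vectors), computing the same function with identical witness sizes for all inputs and all
cost vectors. -/
theorem spanProgram_strict_exists (n : ℕ) (P : SpanProgram n) :
    ∃ P' : SpanProgram n,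
      (∀ i : Fin P'.m, P'.label i ≠ none) ∧
      (∀ x : Fin n → Bool, (P'.eval x ↔ P.eval x)) ∧
      ∀ (s : Fin n → ℝ), (∀ j, 0 ≤ s j) →
        ∀ x : Fin n → Bool, P'.wsizex s x = P.wsizex s x := by
  have heval (x : Fin n → Bool) : P.strictify.eval x ↔ P.eval x := by
    rw [P.strictify.eval_iff_posCosts_nonempty x 0, P.eval_iff_posCosts_nonempty x 0,
      P.posCosts_strictify]
  refine ⟨P.strictify, P.strictify_label_ne_none, heval, fun s _ x => ?_⟩
  rw [P.strictify.wsizex_eq_ite, P.wsizex_eq_ite, heval, P.posCosts_strictify,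
    P.negCosts_strictify]
end
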